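/- For every integer n ≥ 1, let Γ_n be the digraph on vertices v_1,…,v_n,u_1,…,u_n with edges: v_i → v_{i+1} (indices mod n), u_{i+1} → u_i (indices mod n), and both v_i → u_i and u_i → v_i for all i. Then Γ_n is 2-regular, strongly connected, and has diameter ⌊n/2⌋ + 1. -/

import Mathlib

/-!
Write `c = j - i` for the offset of two indices. The candidate distance from `v_i` to `v_j` is
`min c ((-c) + 2)`: either walk forward along the `v`-cycle, or step down to `u_i`, walk backward
along the `u`-cycle and step up. Between `v_i` and `u_j` (either way round) it is `min c (-c) + 1`,
and from `u_i` to `u_j` it is the `v`-formula at `-c`. Walks of these lengths are explicit, and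
they are shortest because, from a fixed source, the candidate distance grows by at most one along
every edge. The largest value, `⌊n/2⌋ + 1`, is attained from `v_0` to `u_⌊n/2⌋`.
-/

open Set

namespace PaperDRD

variable {V : Type*}

def HasWalk (E : V → V → Prop) (u v : V) (n : ℕ) : Prop :=
  ∃ f : Fin (n + 1) → V, f 0 = u ∧ f (Fin.last n) = v ∧
    ∀ i : Fin n, E (f i.castSucc) (f i.succ)

def StronglyConnected (E : V → V → Prop) : Prop :=
  ∀ u v : V, ∃ n : ℕ, HasWalk E u v n

noncomputable def ddist (E : V → V → Prop) (u v : V) : ℕ :=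
  sInf {n : ℕ | HasWalk E u v n}

noncomputable def girth (E : V → V → Prop) : ℕ :=
  sInf {n : ℕ | 0 < n ∧ ∃ u : V, HasWalk E u u n}

noncomputable def diam [Fintype V] (E : V → V → Prop) : ℕ :=
  Finset.univ.sup fun p : V × V => ddist E p.1 p.2

noncomputable def outDeg (E : V → V → Prop) (x : V) : ℕ := {y : V | E x y}.ncard

noncomputable def inDeg (E : V → V → Prop) (x : V) : ℕ := {y : V | E y x}.ncard

def IsRegular (E : V → V → Prop) (k : ℕ) : Prop :=
  ∀ x : V, outDeg E x = k ∧ inDeg E x = k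

def DelEdges (E : V → V → Prop) (F : Set (V × V)) : V → V → Prop :=
  fun a b => E a b ∧ (a, b) ∉ F

def IsEdgeCut (E : V → V → Prop) (F : Set (V × V)) : Prop :=
  (∀ e ∈ F, E e.1 e.2) ∧ ¬ StronglyConnected (DelEdges E F)

noncomputable def edgeConnectivity (E : V → V → Prop) : ℕ :=
  sInf {n : ℕ | ∃ F : Set (V × V), IsEdgeCut E F ∧ F.ncard = n}

def IsMinEdgeCut (E : V → V → Prop) (F : Set (V × V)) : Prop :=
  IsEdgeCut E F ∧ F.ncard = edgeConnectivity E

def outStar (E : V → V → Prop) (x : V) : Set (V × V) := {e : V × V | e.1 = x ∧ E x e.2}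

def inStar (E : V → V → Prop) (x : V) : Set (V × V) := {e : V × V | e.2 = x ∧ E e.1 x}

def IsDRDigraph (E : V → V → Prop) (k : ℕ) : Prop :=
  Irreflexive E ∧ IsRegular E k ∧ StronglyConnected E ∧
    ∀ (i m : ℕ) (u v u' v' : V), 1 ≤ m → ddist E u v = m → ddist E u' v' = m →
      {w : V | ddist E u w = i ∧ E v w}.ncard = {w : V | ddist E u' w = i ∧ E v' w}.ncard

def IsSRDigraph (E : V → V → Prop) (n k t lam mu : ℕ) : Prop :=
  Irreflexive E ∧ Nat.card V = n ∧ IsRegular E k ∧ StronglyConnected E ∧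
    (∀ u : V, {w : V | E u w ∧ E w u}.ncard = t) ∧
    (∀ u v : V, u ≠ v → E u v → {w : V | E u w ∧ E w v}.ncard = lam) ∧
    (∀ u v : V, u ≠ v → ¬ E u v → {w : V | E u w ∧ E w v}.ncard = mu)

def IsUndirectedCycleN (E : V → V → Prop) (n : ℕ) : Prop :=
  ∃ e : V ≃ ZMod n, ∀ a b : V, E a b ↔ (e b = e a + 1 ∨ e a = e b + 1)

def IsUndirectedCycle (E : V → V → Prop) : Prop :=
  ∃ n : ℕ, 3 ≤ n ∧ IsUndirectedCycleN E n

section Walks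

variable {E : V → V → Prop} {x y z : V} {m : ℕ}

theorem HasWalk.of_succ (g : ℕ → V) (h : ∀ k, E (g k) (g (k + 1))) (d : ℕ) :
    HasWalk E (g 0) (g d) d :=
  ⟨fun k => g k, rfl, rfl, fun k => h k⟩

theorem HasWalk.cons (e : E x y) (h : HasWalk E y z m) : HasWalk E x z (m + 1) := by
  obtain ⟨f, h0, hl, he⟩ := h
  refine ⟨Fin.cons x f, rfl, by simpa [← Fin.succ_last] using hl, fun i => ?_⟩
  cases i using Fin.cases with
  | zero => simpa [h0] using e
  | succ j => simpa [← Fin.succ_castSucc] using he j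

theorem HasWalk.snoc (h : HasWalk E x y m) (e : E y z) : HasWalk E x z (m + 1) := by
  obtain ⟨f, h0, hl, he⟩ := h
  refine ⟨Fin.snoc f z, ?_, by simp, fun i => ?_⟩
  · rw [← Fin.castSucc_zero, Fin.snoc_castSucc, h0]
  cases i using Fin.lastCases with
  | last => simpa [hl] using e
  | cast j => rw [Fin.succ_castSucc, Fin.snoc_castSucc, Fin.snoc_castSucc]; exact he j

theorem HasWalk.eq_of_length_zero (h : HasWalk E x y 0) : x = y := by
  obtain ⟨f, h0, hl, -⟩ := h
  exact h0.symm.trans hl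

theorem HasWalk.exists_last_step (h : HasWalk E x y (m + 1)) :
    ∃ w, HasWalk E x w m ∧ E w y := by
  obtain ⟨f, h0, hl, he⟩ := h
  refine ⟨f (Fin.last m).castSucc, ⟨fun i => f i.castSucc, h0, rfl, fun j => ?_⟩, ?_⟩
  · simpa [← Fin.succ_castSucc] using he j.castSucc
  · simpa [hl] using he (Fin.last m)

theorem HasWalk.le_of_potential (φ : V → ℕ) (h0 : φ x = 0)
    (hstep : ∀ y z, E y z → φ z ≤ φ y + 1) (h : HasWalk E x y m) : φ y ≤ m := by
  induction m generalizing y with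
  | zero => rw [← h.eq_of_length_zero, h0]
  | succ m ih =>
    obtain ⟨w, hw, e⟩ := h.exists_last_step
    exact (hstep w y e).trans (Nat.succ_le_succ (ih hw))

theorem ddist_eq_of_potential (D : V → V → ℕ) (hwalk : ∀ x y, HasWalk E x y (D x y))
    (hself : ∀ x, D x x = 0) (hstep : ∀ x y z, E y z → D x z ≤ D x y + 1) (x y : V) :
    ddist E x y = D x y :=
  le_antisymm (Nat.sInf_le (hwalk x y))
    (HasWalk.le_of_potential (D x) (hself x) (hstep x)
      (Nat.sInf_mem (s := {m | HasWalk E x y m}) ⟨_, hwalk x y⟩))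

theorem diam_eq_of_forall_le [Fintype V] {d : ℕ} (hle : ∀ x y, ddist E x y ≤ d)
    (hxy : ddist E x y = d) : diam E = d :=
  le_antisymm (Finset.sup_le fun p _ => hle p.1 p.2)
    (hxy ▸ Finset.le_sup (f := fun p : V × V => ddist E p.1 p.2) (Finset.mem_univ (x, y)))

end Walks

section Offsets

variable {n : ℕ} (c : Fin n)

/-- `vvDist (j - i)` and `vuDist (j - i)` are the distances from `v_i` to `v_j` and from `v_i`
to `u_j`. -/
def vvDist : ℕ := min c.val ((-c).val + 2)

def vuDist : ℕ := min c.val (-c).val + 1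

theorem vuDist_le_vvDist_add_one : vuDist c ≤ vvDist c + 1 := by
  simp only [vuDist, vvDist]; omega

theorem vvDist_le_vuDist_add_one : vvDist c ≤ vuDist c + 1 := by
  simp only [vuDist, vvDist]; omega

theorem vuDist_le_vvDist_neg_add_one : vuDist c ≤ vvDist (-c) + 1 := by
  simp only [vuDist, vvDist, neg_neg]; omega

theorem vvDist_neg_le_vuDist_add_one : vvDist (-c) ≤ vuDist c + 1 := by
  simp only [vuDist, vvDist, neg_neg]; omega

variable [NeZero n]

theorem Fin.val_add_one_eq_ite : (c + 1).val = if c.val + 1 = n then 0 else c.val + 1 := by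
  obtain ⟨m, rfl⟩ := Nat.exists_eq_succ_of_ne_zero (NeZero.ne n)
  simp [Fin.val_add_one, Fin.ext_iff]

theorem vvDist_add_one_le : vvDist (c + 1) ≤ vvDist c + 1 := by
  have := c.isLt
  simp only [vvDist, Fin.val_neg, ← Fin.val_eq_zero_iff, Fin.val_add_one_eq_ite]
  grind

theorem vuDist_add_one_le : vuDist (c + 1) ≤ vuDist c + 1 := by
  have := c.isLt
  simp only [vuDist, Fin.val_neg, ← Fin.val_eq_zero_iff, Fin.val_add_one_eq_ite]
  grind

theorem vuDist_le_vuDist_add_one : vuDist c ≤ vuDist (c + 1) + 1 := by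
  have := c.isLt
  simp only [vuDist, Fin.val_neg, ← Fin.val_eq_zero_iff, Fin.val_add_one_eq_ite]
  grind

theorem vvDist_le_half : vvDist c ≤ n / 2 + 1 := by
  have := c.isLt
  simp only [vvDist, Fin.val_neg, ← Fin.val_eq_zero_iff]
  grind

theorem vuDist_le_half : vuDist c ≤ n / 2 + 1 := by
  have := c.isLt
  simp only [vuDist, Fin.val_neg, ← Fin.val_eq_zero_iff]
  grind

end Offsets

section Gamma

open Fin.CommRing Fin.NatCast

variable {n : ℕ} [NeZero n]

variable (n) in
/-- `Γ_n`, with `inl i` standing for `v_i` and `inr i` for `u_i`. -/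
def gammaAdj : Fin n ⊕ Fin n → Fin n ⊕ Fin n → Prop
  | .inl a, .inl b => b = a + 1
  | .inr a, .inr b => a = b + 1
  | .inl a, .inr b | .inr a, .inl b => a = b

variable (n) in
def gammaDist : Fin n ⊕ Fin n → Fin n ⊕ Fin n → ℕ
  | .inl i, .inl j => vvDist (j - i)
  | .inl i, .inr j | .inr i, .inl j => vuDist (j - i)
  | .inr i, .inr j => vvDist (i - j)

theorem isRegular_gammaAdj : IsRegular (gammaAdj n) 2 := by
  have pair (a b : Fin n) : ({.inl a, .inr b} : Set (Fin n ⊕ Fin n)).ncard = 2 :=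
    Set.ncard_pair Sum.inl_ne_inr
  rintro (a | a) <;> refine ⟨?_, ?_⟩ <;> simp only [outDeg, inDeg]
  · convert pair (a + 1) a
    ext (b | b) <;> grind [gammaAdj]
  · convert pair (a - 1) a
    ext (b | b) <;> grind [gammaAdj]
  · convert pair a (a - 1)
    ext (b | b) <;> grind [gammaAdj]
  · convert pair a (a + 1)
    ext (b | b) <;> grind [gammaAdj]

theorem hasWalk_inl_inl (i j : Fin n) : HasWalk (gammaAdj n) (.inl i) (.inl j) (j - i).val := by
  simpa using HasWalk.of_succ (E := gammaAdj n) (fun k : ℕ => .inl (i + (k : Fin n)))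
    (fun k => by simp only [gammaAdj]; push_cast; ring) (j - i).val

theorem hasWalk_inr_inr (i j : Fin n) : HasWalk (gammaAdj n) (.inr i) (.inr j) (i - j).val := by
  simpa using HasWalk.of_succ (E := gammaAdj n) (fun k : ℕ => .inr (i - (k : Fin n)))
    (fun k => by simp only [gammaAdj]; push_cast; ring) (i - j).val

theorem hasWalk_gammaDist (x y : Fin n ⊕ Fin n) : HasWalk (gammaAdj n) x y (gammaDist n x y) := by
  have down (a : Fin n) : gammaAdj n (.inl a) (.inr a) := rfl
  have up (a : Fin n) : gammaAdj n (.inr a) (.inl a) := rfl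
  rcases x with i | i <;> rcases y with j | j <;>
    simp only [gammaDist, vvDist, vuDist, neg_sub]
  · rcases min_choice (j - i).val ((i - j).val + 2) with h | h <;> rw [h]
    · exact hasWalk_inl_inl i j
    · exact ((hasWalk_inr_inr i j).cons (down i)).snoc (up j)
  · rcases min_choice (j - i).val (i - j).val with h | h <;> rw [h]
    · exact (hasWalk_inl_inl i j).snoc (down j)
    · exact (hasWalk_inr_inr i j).cons (down i)
  · rcases min_choice (j - i).val (i - j).val with h | h <;> rw [h]
    · exact (hasWalk_inl_inl i j).cons (up i)
    · exact (hasWalk_inr_inr i j).snoc (up j)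
  · rcases min_choice (i - j).val ((j - i).val + 2) with h | h <;> rw [h]
    · exact hasWalk_inr_inr i j
    · exact ((hasWalk_inl_inl i j).cons (up i)).snoc (down j)

theorem gammaDist_self (x : Fin n ⊕ Fin n) : gammaDist n x x = 0 := by
  rcases x with i | i <;> simp [gammaDist, vvDist]

theorem gammaDist_le_of_adj (x : Fin n ⊕ Fin n) {y z : Fin n ⊕ Fin n} (h : gammaAdj n y z) :
    gammaDist n x z ≤ gammaDist n x y + 1 := by
  rcases x with i | i <;> rcases y with a | a <;> rcases z with b | b <;>
    simp only [gammaAdj] at h <;> subst h <;> simp only [gammaDist]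
  · rw [add_sub_right_comm]; exact vvDist_add_one_le _
  · exact vuDist_le_vvDist_add_one _
  · exact vvDist_le_vuDist_add_one _
  · rw [add_sub_right_comm]; exact vuDist_le_vuDist_add_one _
  · rw [add_sub_right_comm]; exact vuDist_add_one_le _
  · rw [← neg_sub a i]; exact vvDist_neg_le_vuDist_add_one _
  · rw [← neg_sub a i]; exact vuDist_le_vvDist_neg_add_one _
  · rw [show i - b = i - (b + 1) + 1 by ring]; exact vvDist_add_one_le _

theorem ddist_gammaAdj (x y : Fin n ⊕ Fin n) : ddist (gammaAdj n) x y = gammaDist n x y :=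
  ddist_eq_of_potential _ hasWalk_gammaDist gammaDist_self (fun x _ _ => gammaDist_le_of_adj x) x y

theorem gammaDist_le_half (x y : Fin n ⊕ Fin n) : gammaDist n x y ≤ n / 2 + 1 := by
  rcases x with i | i <;> rcases y with j | j
  all_goals first | exact vvDist_le_half _ | exact vuDist_le_half _

theorem gammaDist_inl_zero_inr_half :
    gammaDist n (.inl 0) (.inr ⟨n / 2, Nat.div_lt_self (NeZero.pos n) one_lt_two⟩) =
      n / 2 + 1 := by
  simp only [gammaDist, vuDist, sub_zero, Fin.val_neg, ← Fin.val_eq_zero_iff]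
  grind

theorem diam_gammaAdj : diam (gammaAdj n) = n / 2 + 1 :=
  diam_eq_of_forall_le (fun x y => (ddist_gammaAdj x y).trans_le (gammaDist_le_half x y))
    ((ddist_gammaAdj _ _).trans gammaDist_inl_zero_inr_half)

end Gamma

theorem stmt15_general (n : ℕ) [NeZero n]
    (E : (Fin n ⊕ Fin n) → (Fin n ⊕ Fin n) → Prop)
    (hE : ∀ a b : Fin n,
      (E (Sum.inl a) (Sum.inl b) ↔ b = a + 1) ∧
      (E (Sum.inr a) (Sum.inr b) ↔ a = b + 1) ∧
      (E (Sum.inl a) (Sum.inr b) ↔ a = b) ∧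
      (E (Sum.inr a) (Sum.inl b) ↔ a = b)) :
    IsRegular E 2 ∧ StronglyConnected E ∧ diam E = n / 2 + 1 := by
  obtain rfl : E = gammaAdj n := by
    funext x y
    rcases x with a | a <;> rcases y with b | b <;> simp [gammaAdj, hE]
  exact ⟨isRegular_gammaAdj, fun x y => ⟨_, hasWalk_gammaDist x y⟩, diam_gammaAdj⟩

theorem stmt15 (n : ℕ) [NeZero n] (hn : 1 ≤ n)
    (E : (Fin n ⊕ Fin n) → (Fin n ⊕ Fin n) → Prop)
    (hE : ∀ a b : Fin n,
      (E (Sum.inl a) (Sum.inl b) ↔ b = a + 1) ∧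
      (E (Sum.inr a) (Sum.inr b) ↔ a = b + 1) ∧
      (E (Sum.inl a) (Sum.inr b) ↔ a = b) ∧
      (E (Sum.inr a) (Sum.inl b) ↔ a = b)) :
    IsRegular E 2 ∧ StronglyConnected E ∧ diam E = n / 2 + 1 :=
  stmt15_general n E hE

end PaperDRD
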